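/- If f : [0,∞) → [0,∞) is s-convex in the second sense for s ∈ (0,1], then (1/(b-a))∫_a^b f(x) dx ≤ (1/(s+1))[ (f(a)+f(b))/2 + f((a+b)/2) ]. -/

import Mathlib

/-!
Substituting `x = t b + (1 - t) a` and bounding `f` pointwise by the s-convexity inequality gives
`∫_a^b f ≤ (b - a) (f a + f b) / (s + 1)`, since `∫_0^1 t^s = ∫_0^1 (1 - t)^s = 1 / (s + 1)`.
Applying this on the two halves `[a, (a + b)/2]` and `[(a + b)/2, b]` and adding yields the bound.
-/

open MeasureTheory intervalIntegral Set

/-- `f` is `s`-convex in the second sense on `S`. -/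
def SConvexOn (s : ℝ) (S : Set ℝ) (f : ℝ → ℝ) : Prop :=
  ∀ x ∈ S, ∀ y ∈ S, ∀ t ∈ Icc (0 : ℝ) 1, f (t * x + (1 - t) * y) ≤ t ^ s * f x + (1 - t) ^ s * f y

section

variable {s : ℝ}

theorem integral_rpow_zero_one (hs : -1 < s) : ∫ t in (0 : ℝ)..1, t ^ s = 1 / (s + 1) := by
  rw [integral_rpow (Or.inl hs), Real.one_rpow, Real.zero_rpow (by linarith), sub_zero]

theorem integral_one_sub_rpow_zero_one (hs : -1 < s) :
    ∫ t in (0 : ℝ)..1, (1 - t) ^ s = 1 / (s + 1) := by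
  rw [integral_comp_sub_left (fun t : ℝ ↦ t ^ s) 1, sub_self, sub_zero, integral_rpow_zero_one hs]

theorem intervalIntegrable_one_sub_rpow (hs : -1 < s) :
    IntervalIntegrable (fun t : ℝ ↦ (1 - t) ^ s) volume 0 1 := by
  simpa using ((intervalIntegrable_rpow' (a := 0) (b := 1) hs).comp_sub_left 1).symm

theorem integral_rpow_mul_add_one_sub_rpow_mul (hs : -1 < s) (p q : ℝ) :
    ∫ t in (0 : ℝ)..1, (t ^ s * p + (1 - t) ^ s * q) = (p + q) / (s + 1) := by
  rw [integral_add ((intervalIntegrable_rpow' hs).mul_const p)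
      ((intervalIntegrable_one_sub_rpow hs).mul_const q),
    intervalIntegral.integral_mul_const, intervalIntegral.integral_mul_const,
    integral_rpow_zero_one hs, integral_one_sub_rpow_zero_one hs]
  ring

theorem SConvexOn.integral_le {S : Set ℝ} {f : ℝ → ℝ} {a b : ℝ} (hf : SConvexOn s S f)
    (hs : -1 < s) (ha : a ∈ S) (hb : b ∈ S) (hab : a ≤ b)
    (hfi : IntervalIntegrable f volume a b) :
    ∫ x in a..b, f x ≤ (b - a) * ((f a + f b) / (s + 1)) := by
  have hsubst : (b - a) * ∫ t in (0 : ℝ)..1, f ((b - a) * t + a) = ∫ x in a..b, f x := by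
    simpa only [smul_eq_mul, mul_zero, mul_one, zero_add, sub_add_cancel] using
      smul_integral_comp_mul_add (a := 0) (b := 1) f (b - a) a
  have hfi' : IntervalIntegrable (fun t ↦ f ((b - a) * t + a)) volume 0 1 := by
    rcases hab.eq_or_lt with rfl | hlt
    · simp
    · simpa [(sub_pos.mpr hlt).ne'] using (hfi.comp_add_right a).comp_mul_left (c := b - a)
  have hbound : ∫ t in (0 : ℝ)..1, f ((b - a) * t + a)
      ≤ ∫ t in (0 : ℝ)..1, (t ^ s * f b + (1 - t) ^ s * f a) := by
    refine integral_mono_on zero_le_one hfi' ?_ fun t ht ↦ ?_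
    · exact ((intervalIntegrable_rpow' hs).mul_const _).add
        ((intervalIntegrable_one_sub_rpow hs).mul_const _)
    · have h := hf b hb a ha t ht
      rwa [show t * b + (1 - t) * a = (b - a) * t + a by ring] at h
  rw [← hsubst, add_comm (f a), ← integral_rpow_mul_add_one_sub_rpow_mul hs]
  exact mul_le_mul_of_nonneg_left hbound (sub_nonneg.mpr hab)

end

theorem s_convex_bullen_general (s : ℝ) (f : ℝ → ℝ) (a b : ℝ)
    (hs : s ∈ Set.Ioc (0:ℝ) 1)
    (hconv : ∀ x ∈ Set.Ici (0:ℝ), ∀ y ∈ Set.Ici (0:ℝ), ∀ t ∈ Set.Icc (0:ℝ) 1,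
      f (t * x + (1 - t) * y) ≤ t ^ s * f x + (1 - t) ^ s * f y)
    (ha : 0 ≤ a) (hab : a < b)
    (hfint : IntegrableOn f (Set.Icc a b)) :
    (1 / (b - a)) * ∫ x in a..b, f x ≤
      (1 / (s + 1)) * ((f a + f b) / 2 + f ((a + b) / 2)) := by
  have hsconv : SConvexOn s (Ici 0) f := hconv
  set m := (a + b) / 2 with hm
  have ham : a ≤ m := by linarith
  have hmb : m ≤ b := by linarith
  have hfi : IntervalIntegrable f volume a b :=
    (intervalIntegrable_iff_integrableOn_Icc_of_le hab.le).mpr hfint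
  have hfam : IntervalIntegrable f volume a m :=
    hfi.mono_set (uIcc_subset_uIcc_left (mem_uIcc_of_le ham hmb))
  have hfmb : IntervalIntegrable f volume m b :=
    hfi.mono_set (uIcc_subset_uIcc_right (mem_uIcc_of_le ham hmb))
  have hs' : -1 < s := by linarith [hs.1]
  have hm0 : m ∈ Ici 0 := show 0 ≤ m by linarith
  have hleft := hsconv.integral_le hs' ha hm0 ham hfam
  have hright := hsconv.integral_le hs' hm0 (show 0 ≤ b by linarith) hmb hfmb
  rw [← integral_add_adjacent_intervals hfam hfmb, div_mul_eq_mul_div, one_mul,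
    div_le_iff₀ (sub_pos.mpr hab)]
  calc (∫ x in a..m, f x) + ∫ x in m..b, f x
      ≤ (m - a) * ((f a + f m) / (s + 1)) + (b - m) * ((f m + f b) / (s + 1)) :=
        add_le_add hleft hright
    _ = 1 / (s + 1) * ((f a + f b) / 2 + f m) * (b - a) := by
        rw [hm]; field_simp; ring

theorem s_convex_bullen (s : ℝ) (f : ℝ → ℝ) (a b : ℝ)
    (hs : s ∈ Set.Ioc (0:ℝ) 1)
    (hf : ∀ x ∈ Set.Ici (0:ℝ), 0 ≤ f x)
    (hconv : ∀ x ∈ Set.Ici (0:ℝ), ∀ y ∈ Set.Ici (0:ℝ), ∀ t ∈ Set.Icc (0:ℝ) 1,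
      f (t * x + (1 - t) * y) ≤ t ^ s * f x + (1 - t) ^ s * f y)
    (ha : 0 ≤ a) (hab : a < b)
    (hfint : IntegrableOn f (Set.Icc a b)) :
    (1 / (b - a)) * ∫ x in a..b, f x ≤
      (1 / (s + 1)) * ((f a + f b) / 2 + f ((a + b) / 2)) :=
  s_convex_bullen_general s f a b hs hconv ha hab hfint
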